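/- arXiv:1011.1186 — 3 statements merged into one kernel-verified Lean document; each statement's English description precedes it below -/
import Mathlib

section
/- Let q be real with 0 < q < 1 and let φ(q) = ∑_{n=−∞}^{∞} q^{n²}. Then the continued fraction with first partial numerator c₁ = q and first partial denominator b₁ = 1 + q, and for n ≥ 2 partial numerators cₙ = −q^{2n−1} and partial denominators bₙ = 1 + q^{2n−1} (that is, q/(1+q + (−q³)/(1+q³ + (−q⁵)/(1+q⁵ + (−q⁷)/(1+q⁷ + ⋯))))) converges, and its value equals (φ(q) − 1)/(φ(q) + 1). -/
open Filter

/-- Numerator pairs `(p_{n-1}, p_n)` of the continued fraction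
`c 1 / (b 1 + c 2 / (b 2 + ⋯))` (indices start at 1). -/
noncomputable def cfNum (c b : ℕ → ℝ) : ℕ → ℝ × ℝ
  | 0 => (1, 0)
  | n + 1 => ((cfNum c b n).2, b (n + 1) * (cfNum c b n).2 + c (n + 1) * (cfNum c b n).1)

/-- Denominator pairs `(q_{n-1}, q_n)` of the continued fraction. -/
noncomputable def cfDen (c b : ℕ → ℝ) : ℕ → ℝ × ℝ
  | 0 => (0, 1)
  | n + 1 => ((cfDen c b n).2, b (n + 1) * (cfDen c b n).2 + c (n + 1) * (cfDen c b n).1)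

/-- The continued fraction with partial numerators `c` and partial denominators `b`
(both indexed from 1) converges to `L`, i.e. its convergents tend to `L`. -/
def CFTendsto (c b : ℕ → ℝ) (L : ℝ) : Prop :=
  Tendsto (fun n => (cfNum c b n).2 / (cfDen c b n).2) atTop (nhds L)

lemma cf_closed_form (q : ℝ) (n : ℕ) :
    cfNum (fun n => if n = 1 then q else -q ^ (2 * n - 1))
        (fun n => 1 + q ^ (2 * n - 1)) (n + 1)
      = (∑ k ∈ Finset.range n, q ^ ((k + 1) ^ 2),
         ∑ k ∈ Finset.range (n + 1), q ^ ((k + 1) ^ 2)) ∧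
    cfDen (fun n => if n = 1 then q else -q ^ (2 * n - 1))
        (fun n => 1 + q ^ (2 * n - 1)) (n + 1)
      = (1 + ∑ k ∈ Finset.range n, q ^ ((k + 1) ^ 2),
         1 + ∑ k ∈ Finset.range (n + 1), q ^ ((k + 1) ^ 2)) := by
  induction n with
  | zero => simp [cfNum, cfDen]
  | succ n ih =>
    obtain ⟨h1, h2⟩ := ih
    have hne : n + 1 + 1 ≠ 1 := by omega
    have he1 : 2 * (n + 1 + 1) - 1 = 2 * n + 3 := by omega
    have key : ∀ s : ℝ,
        (1 + q ^ (2 * n + 3)) * (s + q ^ ((n + 1) ^ 2)) + (-q ^ (2 * n + 3)) * s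
          = (s + q ^ ((n + 1) ^ 2)) + q ^ ((n + 1 + 1) ^ 2) := by
      intro s
      have : (n + 1 + 1) ^ 2 = (n + 1) ^ 2 + (2 * n + 3) := by ring
      rw [this, pow_add]; ring
    constructor
    · rw [show n + 1 + 1 = (n + 1) + 1 from rfl, cfNum, h1]
      simp only [if_neg hne, he1, Finset.sum_range_succ]
      exact Prod.ext rfl (key _)
    · rw [show n + 1 + 1 = (n + 1) + 1 from rfl, cfDen, h2]
      simp only [if_neg hne, he1, Finset.sum_range_succ]
      refine Prod.ext rfl ?_
      have := key (1 + ∑ k ∈ Finset.range n, q ^ ((k + 1) ^ 2))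
      simp only [add_assoc] at this ⊢
      linarith [this]

/-- Proposition 1: `(φ(q) - 1)/(φ(q) + 1) = q/(1+q +) -q³/(1+q³ +) -q⁵/(1+q⁵ +) ⋯`
where `φ(q) = ∑_{n=-∞}^∞ q^{n²}`. -/
theorem stmt_1 (q : ℝ) (hq0 : 0 < q) (hq1 : q < 1) :
    CFTendsto
      (fun n => if n = 1 then q else -q ^ (2 * n - 1))
      (fun n => 1 + q ^ (2 * n - 1))
      (((∑' n : ℤ, q ^ (n ^ 2)) - 1) / ((∑' n : ℤ, q ^ (n ^ 2)) + 1)) := by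
  have hq0' : (0:ℝ) ≤ q := hq0.le
  -- summability of the positive-index part
  have hsum : Summable (fun k : ℕ => q ^ ((k + 1) ^ 2)) := by
    refine Summable.of_nonneg_of_le (fun k => by positivity) (fun k => ?_)
      (summable_geometric_of_lt_one hq0' hq1)
    exact pow_le_pow_of_le_one hq0' hq1.le (by nlinarith)
  set T : ℝ := ∑' k : ℕ, q ^ ((k + 1) ^ 2) with hT
  have hT0 : 0 ≤ T := tsum_nonneg fun k => by positivity
  have hT1 : (1:ℝ) + T ≠ 0 := by positivity
  -- identify φ(q)
  have hphi : (∑' n : ℤ, q ^ (n ^ 2)) = 1 + 2 * T := by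
    have hpos : (fun n : ℕ => q ^ (((n : ℤ) + 1) ^ 2)) = fun n : ℕ => q ^ ((n + 1) ^ 2) := by
      funext n
      rw [show ((n : ℤ) + 1) ^ 2 = (((n + 1) ^ 2 : ℕ) : ℤ) by push_cast; ring, zpow_natCast]
    have hneg : (fun n : ℕ => q ^ ((-((n : ℤ) + 1)) ^ 2)) = fun n : ℕ => q ^ ((n + 1) ^ 2) := by
      funext n
      rw [show (-((n : ℤ) + 1)) ^ 2 = (((n + 1) ^ 2 : ℕ) : ℤ) by push_cast; ring, zpow_natCast]
    rw [tsum_of_add_one_of_neg_add_one (by rw [hpos]; exact hsum) (by rw [hneg]; exact hsum)]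
    rw [hpos, hneg]
    norm_num
    ring
  have hval : ((∑' n : ℤ, q ^ (n ^ 2)) - 1) / ((∑' n : ℤ, q ^ (n ^ 2)) + 1) = T / (1 + T) := by
    rw [hphi]
    rw [show (1 + 2 * T - 1) = 2 * T by ring, show (1 + 2 * T + 1) = 2 * (1 + T) by ring,
      mul_div_mul_left _ _ (two_ne_zero)]
  rw [CFTendsto, hval]
  rw [← tendsto_add_atTop_iff_nat 1]
  have heq : (fun n : ℕ => (cfNum (fun n => if n = 1 then q else -q ^ (2 * n - 1))
      (fun n => 1 + q ^ (2 * n - 1)) (n + 1)).2 /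
      (cfDen (fun n => if n = 1 then q else -q ^ (2 * n - 1))
      (fun n => 1 + q ^ (2 * n - 1)) (n + 1)).2)
      = fun n : ℕ => (∑ k ∈ Finset.range (n + 1), q ^ ((k + 1) ^ 2)) /
        (1 + ∑ k ∈ Finset.range (n + 1), q ^ ((k + 1) ^ 2)) := by
    funext n
    rw [(cf_closed_form q n).1, (cf_closed_form q n).2]
  rw [heq]
  have hS : Tendsto (fun n : ℕ => ∑ k ∈ Finset.range (n + 1), q ^ ((k + 1) ^ 2))
      atTop (nhds T) := by
    exact hsum.hasSum.tendsto_sum_nat.comp (tendsto_add_atTop_nat 1)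
  exact Tendsto.div hS (tendsto_const_nhds.add hS) hT1
end

section
/- Let q and a be real with 0 < q < 1 and 0 < a < 1. Then 4·∑_{n=0}^{∞} a^{2n+1}/((2n+1)(1 − q^{2n+1})) = log( ((−a;q)_∞/(a;q)_∞)² ). -/
/-- The q-Pochhammer infinite product `(a; q)_∞ = ∏_{n=0}^∞ (1 - a qⁿ)`. -/
noncomputable def qPoch (a q : ℝ) : ℝ := ∏' n : ℕ, (1 - a * q ^ n)

/-!
Taking logarithms turns the quotient of products into `∑ₙ (log (1 + x) - log (1 - x))` with
`x = a qⁿ`. Expanding each term as `2 ∑ₖ x^{2k+1}/(2k+1)` gives a double series that converges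
absolutely, and summing it over `n` first gives a geometric series in `q^{2k+1}`.
-/

open Real

variable {a q : ℝ}

lemma abs_mul_pow_lt_one (ha : |a| < 1) (hq : |q| ≤ 1) (n : ℕ) : |a * q ^ n| < 1 := by
  rw [abs_mul, abs_pow]
  exact (mul_le_of_le_one_right (abs_nonneg a) (pow_le_one₀ (abs_nonneg q) hq)).trans_lt ha

lemma one_sub_mul_pow_pos (ha : |a| < 1) (hq : |q| ≤ 1) (n : ℕ) : 0 < 1 - a * q ^ n := by
  linarith [le_abs_self (a * q ^ n), abs_mul_pow_lt_one ha hq n]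

lemma summable_log_one_sub_mul_pow (a : ℝ) (hq : |q| < 1) :
    Summable fun n : ℕ => log (1 - a * q ^ n) := by
  simpa [sub_eq_add_neg] using
    Real.summable_log_one_add_of_summable ((summable_geometric_of_abs_lt_one hq).mul_left (-a))

lemma qPoch_eq_exp_tsum_log (ha : |a| < 1) (hq : |q| < 1) :
    qPoch a q = exp (∑' n : ℕ, log (1 - a * q ^ n)) :=
  (Real.rexp_tsum_eq_tprod (one_sub_mul_pow_pos ha hq.le) (summable_log_one_sub_mul_pow a hq)).symm

lemma qPoch_pos (ha : |a| < 1) (hq : |q| < 1) : 0 < qPoch a q := by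
  rw [qPoch_eq_exp_tsum_log ha hq]
  exact exp_pos _

lemma log_qPoch (ha : |a| < 1) (hq : |q| < 1) :
    log (qPoch a q) = ∑' n : ℕ, log (1 - a * q ^ n) := by
  rw [qPoch_eq_exp_tsum_log ha hq, log_exp]

lemma summable_log_one_add_sub_log_one_sub_mul_pow (a : ℝ) (hq : |q| < 1) :
    Summable fun n : ℕ => log (1 + a * q ^ n) - log (1 - a * q ^ n) := by
  simpa using (summable_log_one_sub_mul_pow (-a) hq).sub (summable_log_one_sub_mul_pow a hq)

lemma log_qPoch_neg_div_qPoch (ha : |a| < 1) (hq : |q| < 1) :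
    log (qPoch (-a) q / qPoch a q) =
      ∑' n : ℕ, (log (1 + a * q ^ n) - log (1 - a * q ^ n)) := by
  have ha' : |-a| < 1 := by rwa [abs_neg]
  rw [log_div (qPoch_pos ha' hq).ne' (qPoch_pos ha hq).ne', log_qPoch ha' hq, log_qPoch ha hq,
    ← (summable_log_one_sub_mul_pow (-a) hq).tsum_sub (summable_log_one_sub_mul_pow a hq)]
  simp

lemma hasSum_mul_pow_pow (a : ℝ) (hq : |q| < 1) {m : ℕ} (hm : m ≠ 0) :
    HasSum (fun n : ℕ => (a * q ^ n) ^ m) (a ^ m / (1 - q ^ m)) := by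
  have hqm : |q ^ m| < 1 := by
    rw [abs_pow]
    exact pow_lt_one₀ (abs_nonneg q) hq hm
  rw [div_eq_mul_inv]
  refine ((hasSum_geometric_of_abs_lt_one hqm).mul_left (a ^ m)).congr_fun fun n => ?_
  rw [mul_pow, ← pow_mul, ← pow_mul, mul_comm m n]

lemma summable_log_series_mul_pow_of_nonneg (ha0 : 0 ≤ a) (ha1 : a < 1) (hq0 : 0 ≤ q)
    (hq1 : q < 1) :
    Summable fun p : ℕ × ℕ =>
      2 * (1 / (2 * p.2 + 1 : ℝ)) * (a * q ^ p.1) ^ (2 * p.2 + 1) := by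
  have hx (n : ℕ) : |a * q ^ n| < 1 :=
    abs_mul_pow_lt_one (by rwa [abs_of_nonneg ha0]) (by rw [abs_of_nonneg hq0]; exact hq1.le) n
  -- Summing over `k` first gives the summable series of `log (1 + a qⁿ) - log (1 - a qⁿ)`.
  refine (summable_prod_of_nonneg fun p => by positivity).2
    ⟨fun n => (hasSum_log_sub_log_of_abs_lt_one (hx n)).summable, ?_⟩
  exact (summable_log_one_add_sub_log_one_sub_mul_pow a (by rwa [abs_of_nonneg hq0])).congr
    fun n => (hasSum_log_sub_log_of_abs_lt_one (hx n)).tsum_eq.symm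

lemma summable_log_series_mul_pow (ha : |a| < 1) (hq : |q| < 1) :
    Summable fun p : ℕ × ℕ =>
      2 * (1 / (2 * p.2 + 1 : ℝ)) * (a * q ^ p.1) ^ (2 * p.2 + 1) := by
  refine Summable.of_norm ((summable_log_series_mul_pow_of_nonneg (abs_nonneg a) ha
    (abs_nonneg q) hq).congr fun p => ?_)
  rw [Real.norm_eq_abs, abs_mul, abs_mul, abs_pow, abs_mul, abs_pow, abs_div, abs_one,
    abs_of_pos (by positivity : (0 : ℝ) < 2 * p.2 + 1), abs_two]

theorem tsum_log_one_add_sub_log_one_sub_mul_pow (ha : |a| < 1) (hq : |q| < 1) :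
    ∑' n : ℕ, (log (1 + a * q ^ n) - log (1 - a * q ^ n)) =
      2 * ∑' k : ℕ, a ^ (2 * k + 1) / ((2 * k + 1 : ℝ) * (1 - q ^ (2 * k + 1))) := by
  calc ∑' n : ℕ, (log (1 + a * q ^ n) - log (1 - a * q ^ n))
      = ∑' (n : ℕ) (k : ℕ), 2 * (1 / (2 * k + 1 : ℝ)) * (a * q ^ n) ^ (2 * k + 1) :=
        tsum_congr fun n =>
          (hasSum_log_sub_log_of_abs_lt_one (abs_mul_pow_lt_one ha hq.le n)).tsum_eq.symm
    _ = ∑' (k : ℕ) (n : ℕ), 2 * (1 / (2 * k + 1 : ℝ)) * (a * q ^ n) ^ (2 * k + 1) :=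
        (Summable.tsum_comm (summable_log_series_mul_pow ha hq)
          (f := fun n k : ℕ => 2 * (1 / (2 * k + 1 : ℝ)) * (a * q ^ n) ^ (2 * k + 1))).symm
    _ = ∑' k : ℕ, 2 * (a ^ (2 * k + 1) / ((2 * k + 1 : ℝ) * (1 - q ^ (2 * k + 1)))) :=
        tsum_congr fun k => by
          rw [tsum_mul_left, (hasSum_mul_pow_pow a hq (by omega)).tsum_eq, mul_assoc,
            div_mul_div_comm, one_mul]
    _ = _ := tsum_mul_left

/-- Proposition 7: `4 ∑_{n=0}^∞ a^{2n+1}/((2n+1)(1-q^{2n+1})) = log(((-a;q)_∞/(a;q)_∞)²)`. -/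
theorem stmt_8 (q a : ℝ) (hq0 : 0 < q) (hq1 : q < 1) (ha0 : 0 < a) (ha1 : a < 1) :
    4 * ∑' n : ℕ, a ^ (2 * n + 1) / ((2 * n + 1 : ℝ) * (1 - q ^ (2 * n + 1))) =
      Real.log ((qPoch (-a) q / qPoch a q) ^ 2) := by
  have ha : |a| < 1 := abs_lt.2 ⟨by linarith, ha1⟩
  have hq : |q| < 1 := abs_lt.2 ⟨by linarith, hq1⟩
  rw [log_pow, log_qPoch_neg_div_qPoch ha hq, tsum_log_one_add_sub_log_one_sub_mul_pow ha hq]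
  push_cast
  ring
end

section
/- Let q be real with 0 < q < 1 and let ν₁, ν₂ be positive integers. Then ((−q^{ν₁};q)_∞ (q^{ν₂};q)_∞)/((q^{ν₁};q)_∞ (−q^{ν₂};q)_∞) = exp(−2·(∑_{j=1}^{ν₁−1} arctanh(q^{j}) − ∑_{j=1}^{ν₂−1} arctanh(q^{j}))), where an empty sum equals 0. (This is Proposition 9 of the paper; in the paper the exponent is misprinted with a factor −4 in place of −2.) -/
/-- The inverse hyperbolic tangent. -/
noncomputable def arctanh (x : ℝ) : ℝ := Real.log ((1 + x) / (1 - x)) / 2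

section qPoch

variable {q : ℝ}

lemma summable_neg_mul_pow (a : ℝ) (hq : |q| < 1) : Summable fun n : ℕ ↦ -(a * q ^ n) :=
  ((summable_geometric_of_abs_lt_one hq).mul_left a).neg

lemma multipliable_one_sub_mul_pow (a : ℝ) (hq : |q| < 1) :
    Multipliable fun n : ℕ ↦ 1 - a * q ^ n := by
  simpa only [sub_eq_add_neg] using
    Real.multipliable_one_add_of_summable (summable_neg_mul_pow a hq)

lemma qPoch_eq_one_sub_mul (a : ℝ) (hq : |q| < 1) : qPoch a q = (1 - a) * qPoch (a * q) q := by
  have hshift : (fun n : ℕ ↦ 1 - a * q ^ (n + 1)) = fun n ↦ 1 - a * q * q ^ n := by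
    simp only [pow_succ', mul_assoc]
  rw [qPoch, tprod_eq_zero_mul' (hshift ▸ multipliable_one_sub_mul_pow (a * q) hq), pow_zero,
    mul_one, hshift, qPoch]

lemma qPoch_ne_zero {a : ℝ} (ha : |a| < 1) (hq : |q| < 1) : qPoch a q ≠ 0 := by
  have hfactor (n : ℕ) : 1 + -(a * q ^ n) ≠ 0 := by
    have : |a * q ^ n| < 1 := by
      rw [abs_mul, abs_pow]
      exact (mul_le_of_le_one_right (abs_nonneg a) (pow_le_one₀ (abs_nonneg q) hq.le)).trans_lt ha
    rw [← sub_eq_add_neg, sub_ne_zero]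
    exact fun h ↦ by simp [← h] at this
  simpa only [qPoch, sub_eq_add_neg] using
    tprod_one_add_ne_zero_of_summable hfactor (summable_neg_mul_pow a hq).norm

end qPoch

lemma exp_neg_two_mul_arctanh {x : ℝ} (hx : |x| < 1) :
    Real.exp (-2 * arctanh x) = (1 - x) / (1 + x) := by
  obtain ⟨hx₀, hx₁⟩ := abs_lt.mp hx
  rw [arctanh, show -2 * (Real.log ((1 + x) / (1 - x)) / 2) = -Real.log ((1 + x) / (1 - x)) by
    ring, Real.exp_neg, Real.exp_log (div_pos (by linarith) (by linarith)), inv_div]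

lemma qPoch_neg_mul_div_qPoch_mul {x q : ℝ} (hx : |x| < 1) (hq : |q| < 1) :
    qPoch (-(x * q)) q / qPoch (x * q) q =
      qPoch (-x) q / qPoch x q * Real.exp (-2 * arctanh x) := by
  obtain ⟨hx₀, hx₁⟩ := abs_lt.mp hx
  rw [exp_neg_two_mul_arctanh hx, qPoch_eq_one_sub_mul x hq, qPoch_eq_one_sub_mul (-x) hq,
    neg_mul, mul_div_mul_comm, mul_right_comm, sub_neg_eq_add,
    div_mul_div_comm, mul_comm (1 + x), div_self (by nlinarith), one_mul]

lemma qPoch_neg_pow_div_qPoch_pow {q : ℝ} (hq : |q| < 1) (n : ℕ) :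
    qPoch (-(q ^ (n + 1))) q / qPoch (q ^ (n + 1)) q =
      qPoch (-q) q / qPoch q q *
        Real.exp (-2 * ∑ j ∈ Finset.range n, arctanh (q ^ (j + 1))) := by
  induction n with
  | zero => simp
  | succ n ih =>
    have hpow : |q ^ (n + 1)| < 1 := by
      rw [abs_pow]; exact pow_lt_one₀ (abs_nonneg q) hq n.succ_ne_zero
    rw [pow_succ q (n + 1), qPoch_neg_mul_div_qPoch_mul hpow hq, ih, Finset.sum_range_succ,
      mul_add, Real.exp_add, mul_assoc]

/-- Proposition 9 (corrected): for positive integers `ν₁, ν₂`,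
`((-q^{ν₁};q)_∞ (q^{ν₂};q)_∞)/((q^{ν₁};q)_∞ (-q^{ν₂};q)_∞) =
exp(-2 (∑_{j=1}^{ν₁-1} arctanh(qʲ) - ∑_{j=1}^{ν₂-1} arctanh(qʲ)))`. -/
theorem stmt_13 (q : ℝ) (hq0 : 0 < q) (hq1 : q < 1) (ν₁ ν₂ : ℕ) (hν₁ : 1 ≤ ν₁) (hν₂ : 1 ≤ ν₂) :
    qPoch (-(q ^ ν₁)) q * qPoch (q ^ ν₂) q / (qPoch (q ^ ν₁) q * qPoch (-(q ^ ν₂)) q) =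
      Real.exp (-2 * ((∑ j ∈ Finset.range (ν₁ - 1), arctanh (q ^ (j + 1))) -
        ∑ j ∈ Finset.range (ν₂ - 1), arctanh (q ^ (j + 1)))) := by
  have hq : |q| < 1 := abs_lt.mpr ⟨by linarith, hq1⟩
  have hratio : qPoch (-q) q / qPoch q q ≠ 0 :=
    div_ne_zero (qPoch_ne_zero (by rwa [abs_neg]) hq) (qPoch_ne_zero hq hq)
  obtain ⟨n₁, rfl⟩ := Nat.exists_eq_add_of_le' hν₁
  obtain ⟨n₂, rfl⟩ := Nat.exists_eq_add_of_le' hν₂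
  rw [← div_div_div_eq, qPoch_neg_pow_div_qPoch_pow hq, qPoch_neg_pow_div_qPoch_pow hq,
    mul_div_mul_left _ _ hratio, ← Real.exp_sub, Nat.add_sub_cancel, Nat.add_sub_cancel, mul_sub]
end
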